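/- Fix an integer x_max ≥ 1 and probability distributions μ₁,…,μ_{x_max} on [0,∞), each with finite mean m(1),…,m(x_max). For each n, let the couplings J_X, X ⊆ {1,…,n}, be independent, with J_X ~ μ_{|X|} when 1 ≤ |X| ≤ x_max and J_X = 0 when |X| > x_max. Assume there is a constant C > 0 such that n⁻¹ Σ_{j=1}^{x_max} C(n,j) m(j) ≤ C for all n, where C(n,j) is the binomial coefficient. Assume furthermore that for each instance of the couplings the Gibbs averages of all spin products are nonnegative: for any nonnegative couplings, ⟨σ_X⟩ ≥ 0 for every X (first GKS inequality). Then the sequence of average pressures p_n = E[n⁻¹ ln Σ_{σ∈{±1}ⁿ} exp(Σ_X J_X σ_X)] converges as n → ∞ to a finite limit, which equals sup_n p_n and is at most C + ln 2. -/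

import Mathlib

/-!
By the first GKS inequality, `∂ log Z / ∂J_X = ⟨σ_X⟩ ≥ 0` for nonnegative couplings, so `log Z` is
nondecreasing on the nonnegative orthant. Cutting every coupling `J_X` whose support `X` meets both
`{1,…,n}` and `{n+1,…,n+m}` therefore lowers `log Z_{n+m}`, and what remains splits into
independent systems of sizes `n` and `m` whose couplings have the original laws. Taking
expectations, `n ↦ E log Z_n` is superadditive, and Fekete's lemma makes `p_n = E log Z_n / n`
converge to `sup_n p_n`. Finally `log Z_n ≤ n log 2 + ∑_X J_X` bounds `p_n` by `C + log 2`.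
-/

open MeasureTheory ProbabilityTheory Finset

noncomputable section

/-- The real value of a Boolean spin: `true ↦ 1`, `false ↦ -1`. -/
def spinVal (b : Bool) : ℝ := if b then 1 else -1

/-- The product of spins over a subset `X ⊆ {1,…,n}`. -/
def spinProd {n : ℕ} (X : Finset (Fin n)) (σ : Fin n → Bool) : ℝ :=
  ∏ i ∈ X, spinVal (σ i)

/-- The perturbed Hamiltonian
`H(σ) = -∑_X J_X σ_X - h₀ ∑ᵢ σᵢ - h₁ ∑ᵢ τᵢ σᵢ`. -/
def Ham (n : ℕ) (J : Finset (Fin n) → ℝ) (h₀ h₁ : ℝ) (τ : Fin n → ℕ)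
    (σ : Fin n → Bool) : ℝ :=
  -(∑ X : Finset (Fin n), J X * spinProd X σ)
    - h₀ * ∑ i, spinVal (σ i) - h₁ * ∑ i, (τ i : ℝ) * spinVal (σ i)

/-- The partition function `Z = ∑_σ e^{-H(σ)}`. -/
def Zp (n : ℕ) (H : (Fin n → Bool) → ℝ) : ℝ :=
  ∑ σ : Fin n → Bool, Real.exp (-(H σ))

/-- The Gibbs average `⟨f⟩ = Z⁻¹ ∑_σ f(σ) e^{-H(σ)}`. -/
def gibbs (n : ℕ) (H : (Fin n → Bool) → ℝ) (f : (Fin n → Bool) → ℝ) : ℝ :=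
  (∑ σ : Fin n → Bool, f σ * Real.exp (-(H σ))) / Zp n H

/-- The replicated Gibbs average of a function of `k` i.i.d. replicas. -/
def gibbsRep (n k : ℕ) (H : (Fin n → Bool) → ℝ)
    (f : (Fin k → Fin n → Bool) → ℝ) : ℝ :=
  (∑ σs : Fin k → Fin n → Bool, f σs * ∏ a, Real.exp (-(H (σs a)))) / (Zp n H) ^ k

/-- The multi-overlap `Q_k = n⁻¹ ∑ᵢ σᵢ⁽¹⁾⋯σᵢ⁽ᵏ⁾` of `k` replicas. -/
def QkRep (n k : ℕ) (σs : Fin k → Fin n → Bool) : ℝ :=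
  (n : ℝ)⁻¹ * ∑ i, ∏ a, spinVal (σs a i)

/-- The local magnetization `⟨σᵢ⟩`. -/
def magg (n : ℕ) (H : (Fin n → Bool) → ℝ) (i : Fin n) : ℝ :=
  gibbs n H fun σ => spinVal (σ i)

/-- The two-point function `⟨σᵢσⱼ⟩`. -/
def corrr (n : ℕ) (H : (Fin n → Bool) → ℝ) (i j : Fin n) : ℝ :=
  gibbs n H fun σ => spinVal (σ i) * spinVal (σ j)

/-- `⟨Q_k⟩ = n⁻¹ ∑ᵢ ⟨σᵢ⟩ᵏ`, the Gibbs average of the multi-overlap. -/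
def avgQ (n k : ℕ) (H : (Fin n → Bool) → ℝ) : ℝ :=
  gibbsRep n k H (QkRep n k)

/-- The product of `n` i.i.d. Poisson(`r`) distributions on `ℕⁿ`. -/
def ppi (n : ℕ) (r : ℝ) : Measure (Fin n → ℕ) :=
  Measure.pi fun _ : Fin n => poissonMeasure (Real.toNNReal r)

end

open Filter Topology

theorem tendsto_div_of_superadditive {u : ℕ → ℝ} (hu : ∀ m n, u m + u n ≤ u (m + n))
    (hbdd : BddAbove (Set.range fun n => u n / n)) :
    ∃ L, Tendsto (fun n => u n / n) atTop (𝓝 L) ∧ ∀ n ≠ 0, u n / n ≤ L := by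
  have hsub : Subadditive (-u) := fun m n => by simp only [Pi.neg_apply]; linarith [hu m n]
  have hbdd' : BddBelow (Set.range fun n => (-u) n / n) := by
    simpa only [Pi.neg_apply, neg_div, ← Set.neg_range, bddBelow_neg] using hbdd
  refine ⟨-hsub.lim, ?_, fun n hn => ?_⟩
  · simpa only [Pi.neg_apply, neg_div, neg_neg] using (hsub.tendsto_lim hbdd').neg
  · have := hsub.lim_le_div hbdd' hn
    simp only [Pi.neg_apply, neg_div] at this
    linarith

noncomputable def logZ (n : ℕ) (J : Finset (Fin n) → ℝ) : ℝ :=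
  Real.log (Zp n (Ham n J 0 0 fun _ => 0))

lemma neg_Ham_zero_field (n : ℕ) (J : Finset (Fin n) → ℝ) (σ : Fin n → Bool) :
    -Ham n J 0 0 (fun _ => 0) σ = ∑ X, J X * spinProd X σ := by
  simp [Ham]

lemma Zp_pos (n : ℕ) (H : (Fin n → Bool) → ℝ) : 0 < Zp n H :=
  sum_pos (fun _ _ => Real.exp_pos _) univ_nonempty

lemma abs_spinProd {n : ℕ} (X : Finset (Fin n)) (σ : Fin n → Bool) : |spinProd X σ| = 1 := by
  rw [spinProd, abs_prod]
  exact prod_eq_one fun i _ => by cases σ i <;> simp [spinVal]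

lemma logZ_le (n : ℕ) (J : Finset (Fin n) → ℝ) :
    logZ n J ≤ n * Real.log 2 + ∑ X, |J X| := by
  have hterm (σ : Fin n → Bool) : ∑ X, J X * spinProd X σ ≤ ∑ X, |J X| :=
    sum_le_sum fun X _ => by simpa [abs_mul, abs_spinProd] using le_abs_self (J X * spinProd X σ)
  have hZ : Zp n (Ham n J 0 0 fun _ => 0) ≤ 2 ^ n * Real.exp (∑ X, |J X|) :=
    calc Zp n (Ham n J 0 0 fun _ => 0)
        ≤ ∑ _σ : Fin n → Bool, Real.exp (∑ X, |J X|) :=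
          sum_le_sum fun σ _ => by rw [neg_Ham_zero_field]; exact Real.exp_le_exp.2 (hterm σ)
      _ = 2 ^ n * Real.exp (∑ X, |J X|) := by simp
  calc logZ n J ≤ Real.log (2 ^ n * Real.exp (∑ X, |J X|)) := Real.log_le_log (Zp_pos _ _) hZ
    _ = n * Real.log 2 + ∑ X, |J X| := by
      rw [Real.log_mul (by positivity) (Real.exp_ne_zero _), Real.log_pow, Real.log_exp]

lemma logZ_nonneg {n : ℕ} {J : Finset (Fin n) → ℝ} (hJ : 0 ≤ J) : 0 ≤ logZ n J := by
  refine Real.log_nonneg ?_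
  calc (1 : ℝ) ≤ Real.exp (-Ham n J 0 0 (fun _ => 0) fun _ => true) := by
        rw [Real.one_le_exp_iff, neg_Ham_zero_field]
        exact sum_nonneg fun X _ => by simpa [spinProd, spinVal] using hJ X
    _ ≤ Zp n (Ham n J 0 0 fun _ => 0) :=
        single_le_sum (f := fun σ => Real.exp (-Ham n J 0 0 (fun _ => 0) σ))
          (fun _ _ => (Real.exp_pos _).le) (mem_univ _)

lemma continuous_logZ (n : ℕ) : Continuous (logZ n) := by
  have hZ : Continuous fun J => Zp n (Ham n J 0 0 fun _ => 0) := by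
    simp only [Zp, neg_Ham_zero_field]
    fun_prop
  exact hZ.log fun J => (Zp_pos _ _).ne'

lemma hasDerivAt_logZ_add_smul (n : ℕ) (J D : Finset (Fin n) → ℝ) (s : ℝ) :
    HasDerivAt (fun t => logZ n (J + t • D))
      (∑ X, D X * gibbs n (Ham n (J + s • D) 0 0 fun _ => 0) (spinProd X)) s := by
  set w : (Fin n → Bool) → ℝ := fun σ => Real.exp (-Ham n (J + s • D) 0 0 (fun _ => 0) σ)
  have hZ : HasDerivAt (fun t => Zp n (Ham n (J + t • D) 0 0 fun _ => 0))
      (∑ σ, (∑ X, D X * spinProd X σ) * w σ) s := by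
    simp only [Zp, neg_Ham_zero_field, w]
    refine HasDerivAt.fun_sum fun σ _ => ?_
    refine (HasDerivAt.fun_sum fun X _ => ?_).exp.congr_deriv (mul_comm _ _)
    simpa using ((hasDerivAt_id s).smul_const (D X)).const_add (J X) |>.mul_const (spinProd X σ)
  refine (hZ.log (Zp_pos _ _).ne').congr_deriv ?_
  simp only [gibbs, mul_div_assoc', ← sum_div, mul_sum, sum_mul]
  rw [sum_comm]
  exact congrArg (· / _) (sum_congr rfl fun X _ => sum_congr rfl fun σ _ => by ring)

lemma logZ_mono {n : ℕ}
    (hGKS : ∀ J : Finset (Fin n) → ℝ, (∀ X, 0 ≤ J X) →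
      ∀ X, 0 ≤ gibbs n (Ham n J 0 0 fun _ => 0) (spinProd X))
    {J J' : Finset (Fin n) → ℝ} (hJ : 0 ≤ J) (hJJ' : J ≤ J') : logZ n J ≤ logZ n J' := by
  have hderiv := hasDerivAt_logZ_add_smul n J (J' - J)
  have hmono : MonotoneOn (fun t : ℝ => logZ n (J + t • (J' - J))) (Set.Ici 0) := by
    refine monotoneOn_of_hasDerivWithinAt_nonneg (convex_Ici 0)
      (fun t _ => (hderiv t).continuousAt.continuousWithinAt)
      (fun t _ => (hderiv t).hasDerivWithinAt) fun t ht => ?_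
    rw [interior_Ici, Set.mem_Ioi] at ht
    -- along the segment the couplings stay nonnegative, where GKS makes every `⟨σ_X⟩ ≥ 0`
    have hpos : ∀ X, 0 ≤ (J + t • (J' - J)) X := fun X => by
      simpa using add_nonneg (hJ X) (mul_nonneg ht.le (sub_nonneg.2 (hJJ' X)))
    exact sum_nonneg fun X _ => mul_nonneg (sub_nonneg.2 (hJJ' X)) (hGKS _ hpos X)
  simpa using hmono (Set.mem_Ici.2 le_rfl) (Set.mem_Ici.2 zero_le_one) zero_le_one

section Split

variable {n m : ℕ}

def restrictCouplings {k : ℕ} (e : Fin k ↪ Fin n) (J : Finset (Fin n) → ℝ) :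
    Finset (Fin k) → ℝ :=
  fun Y => J (Y.map e)

def blockSubsets (n m : ℕ) : Finset (Finset (Fin (n + m))) :=
  (univ.image fun Y : Finset (Fin n) => Y.map (Fin.castAddEmb m)) ∪
    univ.image fun Y : Finset (Fin m) => Y.map (Fin.natAddEmb n)

lemma eq_empty_of_map_castAdd_eq_map_natAdd {Y : Finset (Fin n)} {Y' : Finset (Fin m)}
    (h : Y.map (Fin.castAddEmb m) = Y'.map (Fin.natAddEmb n)) : Y = ∅ := by
  refine eq_empty_of_forall_notMem fun i hi => ?_
  obtain ⟨j, -, hj⟩ := mem_map.1 (h ▸ mem_map_of_mem (Fin.castAddEmb m) hi)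
  have := congrArg Fin.val hj
  simp only [Fin.natAddEmb_apply, Fin.val_natAdd, Fin.coe_castAddEmb, Fin.val_castAdd] at this
  omega

lemma sum_couplings_eq_add_of_blockSubsets {J : Finset (Fin (n + m)) → ℝ}
    (hJ : ∀ X ∉ blockSubsets n m, J X = 0) (hempty : J ∅ = 0) (σ : Fin (n + m) → Bool) :
    ∑ X, J X * spinProd X σ =
      ∑ Y, restrictCouplings (Fin.castAddEmb m) J Y * spinProd Y (σ ∘ Fin.castAdd m)
        + ∑ Y, restrictCouplings (Fin.natAddEmb n) J Y * spinProd Y (σ ∘ Fin.natAdd n) := by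
  classical
  set f : Finset (Fin (n + m)) → ℝ := fun X => J X * spinProd X σ
  set A := univ.image fun Y : Finset (Fin n) => Y.map (Fin.castAddEmb m)
  set B := univ.image fun Y : Finset (Fin m) => Y.map (Fin.natAddEmb n)
  -- the only subset in both blocks is `∅`, whose coupling vanishes
  have hAB : ∀ X ∈ A ∩ B, f X = 0 := fun X hX => by
    obtain ⟨⟨Y, -, rfl⟩, ⟨Y', -, hY'⟩⟩ := And.imp mem_image.1 mem_image.1 (mem_inter.1 hX)
    simp [f, eq_empty_of_map_castAdd_eq_map_natAdd hY'.symm, hempty]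
  calc ∑ X, f X = ∑ X ∈ A ∪ B, f X :=
        (sum_subset (subset_univ _) fun X _ hX => by simp [f, hJ X hX]).symm
    _ = ∑ X ∈ A, f X + ∑ X ∈ B, f X := by rw [← sum_union_inter, sum_eq_zero hAB, add_zero]
    _ = _ := by
      rw [sum_image (Finset.map_injective _).injOn, sum_image (Finset.map_injective _).injOn]
      simp [f, restrictCouplings, spinProd, prod_map]

lemma Zp_eq_mul_of_blockSubsets {J : Finset (Fin (n + m)) → ℝ}
    (hJ : ∀ X ∉ blockSubsets n m, J X = 0) (hempty : J ∅ = 0) :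
    Zp (n + m) (Ham (n + m) J 0 0 fun _ => 0) =
      Zp n (Ham n (restrictCouplings (Fin.castAddEmb m) J) 0 0 fun _ => 0) *
        Zp m (Ham m (restrictCouplings (Fin.natAddEmb n) J) 0 0 fun _ => 0) := by
  simp only [Zp, neg_Ham_zero_field, sum_mul_sum, ← Real.exp_add]
  rw [← (Fin.appendEquiv n m).sum_comp, Fintype.sum_prod_type]
  simp [sum_couplings_eq_add_of_blockSubsets hJ hempty, Function.comp_def]

lemma logZ_restrict_add_logZ_restrict_le
    (hGKS : ∀ J : Finset (Fin (n + m)) → ℝ, (∀ X, 0 ≤ J X) →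
      ∀ X, 0 ≤ gibbs (n + m) (Ham (n + m) J 0 0 fun _ => 0) (spinProd X))
    {J : Finset (Fin (n + m)) → ℝ} (hJ : 0 ≤ J) (hempty : J ∅ = 0) :
    logZ n (restrictCouplings (Fin.castAddEmb m) J)
      + logZ m (restrictCouplings (Fin.natAddEmb n) J) ≤ logZ (n + m) J := by
  classical
  set J' : Finset (Fin (n + m)) → ℝ := fun X => if X ∈ blockSubsets n m then J X else 0
  have hL : restrictCouplings (Fin.castAddEmb m) J' = restrictCouplings (Fin.castAddEmb m) J :=
    funext fun Y => if_pos (mem_union_left _ (mem_image_of_mem _ (mem_univ Y)))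
  have hR : restrictCouplings (Fin.natAddEmb n) J' = restrictCouplings (Fin.natAddEmb n) J :=
    funext fun Y => if_pos (mem_union_right _ (mem_image_of_mem _ (mem_univ Y)))
  have hJ'J : J' ≤ J := fun X => by simp only [J']; split_ifs; exacts [le_rfl, hJ X]
  have hJ' : 0 ≤ J' := fun X => by simp only [J']; split_ifs; exacts [hJ X, le_rfl]
  have hfactor : Zp (n + m) (Ham (n + m) J' 0 0 fun _ => 0) =
      Zp n (Ham n (restrictCouplings (Fin.castAddEmb m) J) 0 0 fun _ => 0) *
        Zp m (Ham m (restrictCouplings (Fin.natAddEmb n) J) 0 0 fun _ => 0) := by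
    rw [← hL, ← hR]
    exact Zp_eq_mul_of_blockSubsets (fun X hX => if_neg hX) (by simp [J', hempty])
  calc _ = logZ (n + m) J' := by
        rw [logZ, logZ, logZ, hfactor, Real.log_mul (Zp_pos _ _).ne' (Zp_pos _ _).ne']
    _ ≤ logZ (n + m) J := logZ_mono hGKS hJ' hJ'J

end Split

lemma measurePreserving_comp_of_injective {ι κ α : Type*} [Fintype ι] [Fintype κ]
    [MeasurableSpace α] (μ : ι → Measure α) [∀ i, IsProbabilityMeasure (μ i)] {g : κ → ι}
    (hg : Function.Injective g) :
    MeasurePreserving (fun (x : ι → α) k => x (g k)) (Measure.pi μ)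
      (Measure.pi fun k => μ (g k)) := by
  refine ⟨by fun_prop, (Measure.pi_eq fun s hs => ?_).symm⟩
  have hpre : (fun (x : ι → α) k => x (g k)) ⁻¹' Set.univ.pi s =
      Set.univ.pi fun i => ⋂ (k) (_ : g k = i), s k := by
    ext x
    simpa using ⟨fun h i k hk => hk ▸ h k, fun h k => h _ k rfl⟩
  rw [Measure.map_apply (by fun_prop) (.univ_pi hs), hpre, Measure.pi_pi]
  refine (Fintype.prod_of_injective g hg _ _ (fun i hi => ?_) fun k => ?_).symm
  · simp [Set.iInter_eq_univ.2 fun k => Set.iInter_eq_univ.2 fun hk => absurd ⟨k, hk⟩ hi]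
  · simp [hg.eq_iff]

lemma MeasureTheory.MeasurePreserving.integral_comp_of_aestronglyMeasurable {α β : Type*}
    [MeasurableSpace α] [MeasurableSpace β] {μ : Measure α} {μ' : Measure β} {f : α → β}
    (hf : MeasurePreserving f μ μ') {g : β → ℝ} (hg : AEStronglyMeasurable g μ') :
    ∫ x, g (f x) ∂μ = ∫ y, g y ∂μ' := by
  rw [← hf.map_eq] at hg ⊢
  exact (integral_map hf.measurable.aemeasurable hg).symm

section Couplings

variable (ν : ℕ → Measure ℝ) [∀ j, IsProbabilityMeasure (ν j)]

noncomputable def couplingLaw (n : ℕ) : Measure (Finset (Fin n) → ℝ) :=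
  Measure.pi fun X : Finset (Fin n) => ν X.card

instance (n : ℕ) : IsProbabilityMeasure (couplingLaw ν n) := by
  unfold couplingLaw
  infer_instance

noncomputable def meanLogZ (n : ℕ) : ℝ :=
  ∫ J, logZ n J ∂couplingLaw ν n

lemma measurePreserving_restrictCouplings {n k : ℕ} (e : Fin k ↪ Fin n) :
    MeasurePreserving (restrictCouplings e) (couplingLaw ν n) (couplingLaw ν k) := by
  have h := measurePreserving_comp_of_injective (fun X : Finset (Fin n) => ν X.card)
    (Finset.map_injective e)
  simp only [card_map] at h
  exact h

variable {ν}

lemma measurePreserving_eval_couplingLaw {n : ℕ} (X : Finset (Fin n)) :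
    MeasurePreserving (fun J => J X) (couplingLaw ν n) (ν X.card) :=
  measurePreserving_eval _ X

lemma ae_nonneg_couplingLaw (hsupp : ∀ j, ν j (Set.Iio 0) = 0) (n : ℕ) :
    ∀ᵐ J ∂couplingLaw ν n, 0 ≤ J := by
  have hpos (j : ℕ) : ∀ᵐ x ∂ν j, 0 ≤ x :=
    ae_iff.2 (measure_mono_null (fun _ hx => not_le.1 hx) (hsupp j))
  exact ae_all_iff.2 fun X =>
    (measurePreserving_eval_couplingLaw X).quasiMeasurePreserving.ae (hpos X.card)

lemma ae_empty_couplingLaw (hν₀ : ν 0 = Measure.dirac 0) (n : ℕ) :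
    ∀ᵐ J ∂couplingLaw ν n, J ∅ = 0 :=
  (measurePreserving_eval_couplingLaw ∅).quasiMeasurePreserving.ae (p := fun x => x = 0)
    (by simp [hν₀, ae_dirac_eq])

lemma ae_logZ_le (hsupp : ∀ j, ν j (Set.Iio 0) = 0) (n : ℕ) :
    ∀ᵐ J ∂couplingLaw ν n, logZ n J ≤ n * Real.log 2 + ∑ X, J X := by
  filter_upwards [ae_nonneg_couplingLaw hsupp n] with J hJ
  simpa only [abs_of_nonneg (hJ _)] using logZ_le n J

lemma integrable_logZ (hsupp : ∀ j, ν j (Set.Iio 0) = 0) (hmean : ∀ j, Integrable id (ν j))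
    (n : ℕ) : Integrable (logZ n) (couplingLaw ν n) := by
  refine Integrable.mono' (g := fun J => n * Real.log 2 + ∑ X, J X) ?_
    (continuous_logZ n).aestronglyMeasurable ?_
  · exact (integrable_const _).add (integrable_finsetSum _ fun X _ => integrable_eval (hmean _))
  · filter_upwards [ae_nonneg_couplingLaw hsupp n, ae_logZ_le hsupp n] with J hJ hle
    rwa [Real.norm_of_nonneg (logZ_nonneg hJ)]

lemma meanLogZ_nonneg (hsupp : ∀ j, ν j (Set.Iio 0) = 0) (n : ℕ) : 0 ≤ meanLogZ ν n :=
  integral_nonneg_of_ae <| (ae_nonneg_couplingLaw hsupp n).mono fun _ => logZ_nonneg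

lemma meanLogZ_le (hsupp : ∀ j, ν j (Set.Iio 0) = 0) (hmean : ∀ j, Integrable id (ν j))
    (n : ℕ) :
    meanLogZ ν n ≤ n * Real.log 2 + ∑ j ∈ range (n + 1), (n.choose j : ℝ) * ∫ x, x ∂ν j := by
  have hint : ∀ X : Finset (Fin n), Integrable (fun J => J X) (couplingLaw ν n) :=
    fun X => integrable_eval (hmean _)
  calc meanLogZ ν n ≤ ∫ J, (n * Real.log 2 + ∑ X, J X) ∂couplingLaw ν n :=
        integral_mono_ae (integrable_logZ hsupp hmean n)
          ((integrable_const _).add (integrable_finsetSum _ fun X _ => hint X))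
          (ae_logZ_le hsupp n)
    _ = n * Real.log 2 + ∑ X : Finset (Fin n), ∫ x, x ∂ν X.card := by
        rw [integral_add (integrable_const _) (integrable_finsetSum _ fun X _ => hint X),
          integral_finsetSum _ fun X _ => hint X]
        simp [couplingLaw, integral_eval]
    _ = _ := by
        rw [← powerset_univ, sum_powerset_apply_card (fun j => ∫ x, x ∂ν j)]
        simp

lemma meanLogZ_add_le (hsupp : ∀ j, ν j (Set.Iio 0) = 0) (hmean : ∀ j, Integrable id (ν j))
    (hν₀ : ν 0 = Measure.dirac 0)
    (hGKS : ∀ (n : ℕ) (J : Finset (Fin n) → ℝ), (∀ X, 0 ≤ J X) →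
      ∀ X, 0 ≤ gibbs n (Ham n J 0 0 fun _ => 0) (spinProd X))
    (n m : ℕ) : meanLogZ ν n + meanLogZ ν m ≤ meanLogZ ν (n + m) := by
  have hL := measurePreserving_restrictCouplings ν (Fin.castAddEmb m : Fin n ↪ Fin (n + m))
  have hR := measurePreserving_restrictCouplings ν (Fin.natAddEmb n : Fin m ↪ Fin (n + m))
  have hintL : Integrable (fun J => logZ n (restrictCouplings (Fin.castAddEmb m) J))
      (couplingLaw ν (n + m)) := hL.integrable_comp_of_integrable (integrable_logZ hsupp hmean n)
  have hintR : Integrable (fun J => logZ m (restrictCouplings (Fin.natAddEmb n) J))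
      (couplingLaw ν (n + m)) := hR.integrable_comp_of_integrable (integrable_logZ hsupp hmean m)
  calc meanLogZ ν n + meanLogZ ν m = ∫ J, (logZ n (restrictCouplings (Fin.castAddEmb m) J)
        + logZ m (restrictCouplings (Fin.natAddEmb n) J)) ∂couplingLaw ν (n + m) := by
        rw [integral_add hintL hintR,
          hL.integral_comp_of_aestronglyMeasurable (continuous_logZ n).aestronglyMeasurable,
          hR.integral_comp_of_aestronglyMeasurable (continuous_logZ m).aestronglyMeasurable]
        rfl
    _ ≤ meanLogZ ν (n + m) := by
        refine integral_mono_ae (hintL.add hintR) (integrable_logZ hsupp hmean _) ?_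
        filter_upwards [ae_nonneg_couplingLaw hsupp _, ae_empty_couplingLaw hν₀ _]
          with J hJ hJ₀
        exact logZ_restrict_add_logZ_restrict_le (hGKS _) hJ hJ₀

end Couplings

lemma sum_range_choose_mul_eq_sum_Icc {g : ℕ → ℝ} {xmax : ℕ} (hg₀ : g 0 = 0)
    (hg : ∀ j, xmax < j → g j = 0) (n : ℕ) :
    ∑ j ∈ range (n + 1), (n.choose j : ℝ) * g j = ∑ j ∈ Icc 1 xmax, (n.choose j : ℝ) * g j := by
  calc ∑ j ∈ range (n + 1), (n.choose j : ℝ) * g j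
      = ∑ j ∈ range (n + 1) ∩ Icc 1 xmax, (n.choose j : ℝ) * g j := by
        refine (sum_subset inter_subset_left fun j hj hj' => ?_).symm
        simp only [mem_inter, mem_range, mem_Icc, not_and, not_le] at hj hj'
        rcases Nat.eq_zero_or_pos j with rfl | hj₀
        · simp [hg₀]
        · simp [hg j (by omega)]
    _ = ∑ j ∈ Icc 1 xmax, (n.choose j : ℝ) * g j := by
        refine sum_subset inter_subset_right fun j hj hj' => ?_
        simp only [mem_inter, mem_range, mem_Icc] at hj hj'
        simp [Nat.choose_eq_zero_of_lt (show n < j by omega)]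

lemma meanLogZ_div_le {ν : ℕ → Measure ℝ} [∀ j, IsProbabilityMeasure (ν j)] {xmax : ℕ} {C : ℝ}
    (hsupp : ∀ j, ν j (Set.Iio 0) = 0) (hmean : ∀ j, Integrable id (ν j))
    (hν₀ : ν 0 = Measure.dirac 0) (hνtail : ∀ j, xmax < j → ν j = Measure.dirac 0)
    (hmeanbound : ∀ n : ℕ, 1 ≤ n →
      (n : ℝ)⁻¹ * ∑ j ∈ Icc 1 xmax, (n.choose j : ℝ) * (∫ x, x ∂(ν j)) ≤ C)
    {n : ℕ} (hn : n ≠ 0) : meanLogZ ν n / n ≤ C + Real.log 2 := by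
  have hn' : (0 : ℝ) < n := by positivity
  have hmeans := meanLogZ_le hsupp hmean n
  rw [sum_range_choose_mul_eq_sum_Icc (by simp [hν₀]) (fun j hj => by simp [hνtail j hj])]
    at hmeans
  have hC := hmeanbound n (Nat.one_le_iff_ne_zero.2 hn)
  rw [inv_mul_le_iff₀ hn'] at hC
  rw [div_le_iff₀ hn']
  linarith

theorem thermodynamic_limit_exists_general
    (xmax : ℕ)
    (ν : ℕ → Measure ℝ) [∀ j, IsProbabilityMeasure (ν j)]
    (hsupp : ∀ j, ν j (Set.Iio 0) = 0)
    (hmean : ∀ j, Integrable id (ν j))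
    (hν₀ : ν 0 = Measure.dirac 0)
    (hνtail : ∀ j, xmax < j → ν j = Measure.dirac 0)
    (C : ℝ)
    (hmeanbound : ∀ n : ℕ, 1 ≤ n →
      (n : ℝ)⁻¹ * ∑ j ∈ Finset.Icc 1 xmax, (n.choose j : ℝ) * (∫ x, x ∂(ν j)) ≤ C)
    (hGKS1 : ∀ (n : ℕ) (J : Finset (Fin n) → ℝ), (∀ X, 0 ≤ J X) →
      ∀ X : Finset (Fin n),
        0 ≤ gibbs n (Ham n J 0 0 fun _ => 0) (spinProd X))
    (p : ℕ → ℝ)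
    (hp : ∀ n : ℕ, p n =
      ∫ J : Finset (Fin n) → ℝ,
          (n : ℝ)⁻¹ * Real.log (Zp n (Ham n J 0 0 fun _ => 0))
        ∂(Measure.pi fun X : Finset (Fin n) => ν X.card)) :
    ∃ L : ℝ,
      Filter.Tendsto p Filter.atTop (nhds L)
      ∧ L = ⨆ n : ℕ, p n
      ∧ L ≤ C + Real.log 2 := by
  obtain rfl : p = fun n => meanLogZ ν n / n :=
    funext fun n => by rw [hp, integral_const_mul, inv_mul_eq_div]; rfl
  -- `p 0 = 0` (division by `0`) and `p 1 ≥ 0`: bounds on `p n` for `n ≠ 0` hold for all `n`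
  have hextend (q : ℝ) (hq : ∀ n ≠ 0, meanLogZ ν n / n ≤ q) (n : ℕ) : meanLogZ ν n / n ≤ q := by
    rcases eq_or_ne n 0 with rfl | hn
    · simpa using (meanLogZ_nonneg hsupp 1).trans (by simpa using hq 1 one_ne_zero)
    · exact hq n hn
  have hbound : ∀ n, meanLogZ ν n / n ≤ C + Real.log 2 :=
    hextend _ fun n hn => meanLogZ_div_le hsupp hmean hν₀ hνtail hmeanbound hn
  have hbdd : BddAbove (Set.range fun n => meanLogZ ν n / n) :=
    ⟨_, Set.forall_mem_range.2 hbound⟩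
  obtain ⟨L, hL, hLle⟩ :=
    tendsto_div_of_superadditive (meanLogZ_add_le hsupp hmean hν₀ hGKS1) hbdd
  exact ⟨L, hL, le_antisymm (le_of_tendsto' hL (le_ciSup hbdd)) (ciSup_le (hextend L hLle)),
    le_of_tendsto' hL hbound⟩

/-- Proposition B.2, existence of the thermodynamic limit: for
ferromagnetic models with independent couplings `J_X ~ μ_{|X|}` (supported on `[0,∞)`,
with finite means, and `J_X = 0` for `|X| > x_max` or `X = ∅`), if
`n⁻¹ ∑_j C(n,j) m(j) ≤ C` and the first GKS inequality holds, then the average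
pressures `p_n` converge to a finite limit equal to `sup_n p_n`, at most `C + ln 2`. -/
theorem thermodynamic_limit_exists
    (xmax : ℕ) (hxmax : 1 ≤ xmax)
    (ν : ℕ → Measure ℝ) [∀ j, IsProbabilityMeasure (ν j)]
    (hsupp : ∀ j, ν j (Set.Iio 0) = 0)
    (hmean : ∀ j, Integrable id (ν j))
    (hν₀ : ν 0 = Measure.dirac 0)
    (hνtail : ∀ j, xmax < j → ν j = Measure.dirac 0)
    (C : ℝ) (hC : 0 < C)
    (hmeanbound : ∀ n : ℕ, 1 ≤ n →
      (n : ℝ)⁻¹ * ∑ j ∈ Finset.Icc 1 xmax, (n.choose j : ℝ) * (∫ x, x ∂(ν j)) ≤ C)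
    (hGKS1 : ∀ (n : ℕ) (J : Finset (Fin n) → ℝ), (∀ X, 0 ≤ J X) →
      ∀ X : Finset (Fin n),
        0 ≤ gibbs n (Ham n J 0 0 fun _ => 0) (spinProd X))
    (p : ℕ → ℝ)
    (hp : ∀ n : ℕ, p n =
      ∫ J : Finset (Fin n) → ℝ,
          (n : ℝ)⁻¹ * Real.log (Zp n (Ham n J 0 0 fun _ => 0))
        ∂(Measure.pi fun X : Finset (Fin n) => ν X.card)) :
    ∃ L : ℝ,
      Filter.Tendsto p Filter.atTop (nhds L)
      ∧ L = ⨆ n : ℕ, p n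
      ∧ L ≤ C + Real.log 2 :=
  thermodynamic_limit_exists_general xmax ν hsupp hmean hν₀ hνtail C hmeanbound hGKS1 p hp
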